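/- (Pointwise Fisher consistency under the mean residual shift, core of Theorem 1.) Let K ≥ 2^0 be an integer, w : {−1,1}^K → ℝ, and let w̄ = 2^{−K} Σ_{a ∈ {−1,1}^K} w(a) be the average weight. Suppose w attains its maximum at a unique a₀ ∈ {−1,1}^K. Then w(a₀) − w̄ > 0, and every z ∈ ℝ^K attaining the minimum of the residual-weighted conditional ψ-risk z ↦ Σ_{a ∈ {−1,1}^K} (w(a) − w̄) ψ(a ⊙ z) satisfies (a₀)_k z_k ≥ 1 for all k = 1, …, K. -/

import Mathlib

/-- `Tgen s z = max (s - z 1, ..., s - z K, 0)`, the function `T_s` from the paper. -/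
noncomputable def Tgen {K : ℕ} (s : ℝ) (z : Fin K → ℝ) : ℝ :=
  Finset.fold (· ⊔ ·) 0 (fun k => s - z k) Finset.univ

/-- The generalized ψ-loss: `ψ z = T₁ z - T₀ z`. -/
noncomputable def psiLoss {K : ℕ} (z : Fin K → ℝ) : ℝ :=
  Tgen 1 z - Tgen 0 z

open scoped Classical in
/-- The set of sign vectors `{-1, 1}^K`, as a finset of `Fin K → ℝ`. -/
noncomputable def signVecs (K : ℕ) : Finset (Fin K → ℝ) :=
  Finset.image (fun (b : Fin K → Bool) (k : Fin K) => if b k then (1 : ℝ) else -1)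
    Finset.univ

lemma mem_signVecs {K : ℕ} (a : Fin K → ℝ) :
    a ∈ signVecs K ↔ ∀ k, a k = 1 ∨ a k = -1 := by
  classical
  unfold signVecs
  constructor
  · intro h k
    rw [Finset.mem_image] at h
    obtain ⟨b, -, rfl⟩ := h
    by_cases hb : b k <;> simp [hb]
  · intro h
    rw [Finset.mem_image]
    refine ⟨fun k => decide (a k = 1), Finset.mem_univ _, ?_⟩
    funext k
    rcases h k with h1 | h1 <;> norm_num [h1]

lemma signVecs_nonempty (K : ℕ) : (signVecs K).Nonempty :=
  ⟨fun _ => 1, (mem_signVecs _).mpr fun _ => Or.inl rfl⟩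

/-!
Write `u_a(z) = 1 - ψ(a ⊙ z) ∈ [0, 1]`. Since `ψ(x) = 1` as soon as some `x_k ≤ 0`, `u_a(z)` can be
nonzero only for the sign vector `a` matching the sign pattern of `z`; as the residual weights
`c_a = w(a) - w̄` sum to zero, the risk of `z` is therefore `-c_b u_b(z)` for a single `b`. It is
`-c_{a₀}` at `z = a₀`, and `c_b u_b(z) ≤ c_{a₀}` with equality only if `b = a₀` and `u_{a₀}(z) = 1`,
i.e. `ψ(a₀ ⊙ z) = 0`, which means `(a₀)_k z_k ≥ 1` for all `k`.
-/

open Finset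
open scoped BigOperators

lemma sum_sub_expect {ι : Type*} (s : Finset ι) (f : ι → ℝ) :
    ∑ i ∈ s, (f i - 𝔼 j ∈ s, f j) = 0 := by
  rw [sum_sub_distrib, sum_const, card_smul_expect, sub_self]

section PsiLoss

variable {K : ℕ}

lemma Tgen_le {s c : ℝ} {z : Fin K → ℝ} (h0 : 0 ≤ c) (h : ∀ k, s - z k ≤ c) : Tgen s z ≤ c :=
  (fold_max_le ..).mpr ⟨h0, fun k _ => h k⟩

lemma Tgen_nonneg (s : ℝ) (z : Fin K → ℝ) : 0 ≤ Tgen s z :=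
  (le_fold_max ..).mpr (Or.inl le_rfl)

lemma sub_le_Tgen (s : ℝ) (z : Fin K → ℝ) (k : Fin K) : s - z k ≤ Tgen s z :=
  (le_fold_max ..).mpr (Or.inr ⟨k, mem_univ k, le_rfl⟩)

lemma psiLoss_nonneg (z : Fin K → ℝ) : 0 ≤ psiLoss z := by
  have : Tgen 0 z ≤ Tgen 1 z :=
    Tgen_le (Tgen_nonneg _ _) fun k => by linarith [sub_le_Tgen 1 z k]
  rw [psiLoss]; linarith

lemma psiLoss_le_one (z : Fin K → ℝ) : psiLoss z ≤ 1 := by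
  have : Tgen 1 z ≤ Tgen 0 z + 1 :=
    Tgen_le (by linarith [Tgen_nonneg 0 z]) fun k => by linarith [sub_le_Tgen 0 z k]
  rw [psiLoss]; linarith

lemma psiLoss_eq_one_of_nonpos {z : Fin K → ℝ} {k : Fin K} (hk : z k ≤ 0) : psiLoss z = 1 := by
  have h1 : 1 ≤ Tgen 1 z := by linarith [sub_le_Tgen 1 z k]
  have : Tgen 0 z ≤ Tgen 1 z - 1 :=
    Tgen_le (by linarith) fun j => by linarith [sub_le_Tgen 1 z j]
  exact le_antisymm (psiLoss_le_one z) (by rw [psiLoss]; linarith)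

lemma pos_of_psiLoss_lt_one {z : Fin K → ℝ} (h : psiLoss z < 1) (k : Fin K) : 0 < z k := by
  by_contra! hk
  exact h.ne (psiLoss_eq_one_of_nonpos hk)

lemma psiLoss_eq_zero_iff {z : Fin K → ℝ} : psiLoss z = 0 ↔ ∀ k, 1 ≤ z k := by
  constructor
  · intro h k
    have hpos := pos_of_psiLoss_lt_one (h.trans_lt one_pos)
    have : Tgen 0 z = 0 :=
      le_antisymm (Tgen_le le_rfl fun j => by linarith [hpos j]) (Tgen_nonneg _ _)
    rw [psiLoss, this, sub_zero] at h
    linarith [sub_le_Tgen 1 z k]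
  · intro h
    have h1 : Tgen 1 z = 0 :=
      le_antisymm (Tgen_le le_rfl fun k => by linarith [h k]) (Tgen_nonneg _ _)
    have h0 : Tgen 0 z = 0 :=
      le_antisymm (Tgen_le le_rfl fun k => by linarith [h k]) (Tgen_nonneg _ _)
    rw [psiLoss, h0, h1, sub_zero]

end PsiLoss

section SignVecs

variable {K : ℕ}

lemma card_signVecs (K : ℕ) : #(signVecs K) = 2 ^ K := by
  classical
  rw [signVecs, card_image_of_injective, card_univ, Fintype.card_fun, Fintype.card_bool,
    Fintype.card_fin]
  intro b₁ b₂ h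
  funext k
  have hk := congrFun h k
  cases hb₁ : b₁ k <;> cases hb₂ : b₂ k <;> simp only [hb₁, hb₂] at hk ⊢ <;> norm_num at hk

lemma mul_self_of_mem_signVecs {a : Fin K → ℝ} (ha : a ∈ signVecs K) : a * a = 1 := by
  funext k
  rcases (mem_signVecs a).1 ha k with h | h <;> simp [h]

lemma exists_mem_signVecs_ne (hK : 1 ≤ K) {a : Fin K → ℝ} (ha : a ∈ signVecs K) :
    ∃ b ∈ signVecs K, b ≠ a := by
  have ha' := (mem_signVecs a).1 ha
  refine ⟨-a, (mem_signVecs _).2 fun k => ?_, fun h => ?_⟩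
  · rcases ha' k with h | h <;> simp [h]
  · have := congrFun h ⟨0, hK⟩
    rcases ha' ⟨0, hK⟩ with h' | h' <;> simp only [Pi.neg_apply, h'] at this <;> norm_num at this

lemma eq_of_mem_signVecs_of_mul_pos {a b z : Fin K → ℝ} (ha : a ∈ signVecs K)
    (hb : b ∈ signVecs K) (haz : ∀ k, 0 < a k * z k) (hbz : ∀ k, 0 < b k * z k) : a = b := by
  funext k
  have hak := haz k
  have hbk := hbz k
  rcases (mem_signVecs a).1 ha k with h | h <;> rcases (mem_signVecs b).1 hb k with h' | h' <;>
    simp only [h, h'] at hak hbk ⊢ <;> linarith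

lemma psiLoss_mul_eq_one_of_ne {a b z : Fin K → ℝ} (ha : a ∈ signVecs K) (hb : b ∈ signVecs K)
    (hab : a ≠ b) (hbz : psiLoss (b * z) < 1) : psiLoss (a * z) = 1 := by
  refine le_antisymm (psiLoss_le_one _) (not_lt.mp fun haz => hab ?_)
  exact eq_of_mem_signVecs_of_mul_pos ha hb (pos_of_psiLoss_lt_one haz)
    (pos_of_psiLoss_lt_one hbz)

end SignVecs

section PsiRisk

variable {K : ℕ} {c : (Fin K → ℝ) → ℝ}

noncomputable def psiRisk (c : (Fin K → ℝ) → ℝ) (z : Fin K → ℝ) : ℝ :=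
  ∑ a ∈ signVecs K, c a * psiLoss (a * z)

lemma psiRisk_eq_of_forall_ne {b z : Fin K → ℝ} (hc : ∑ a ∈ signVecs K, c a = 0)
    (hb : b ∈ signVecs K) (h : ∀ a ∈ signVecs K, a ≠ b → psiLoss (a * z) = 1) :
    psiRisk c z = -(c b * (1 - psiLoss (b * z))) := by
  have : psiRisk c z = ∑ a ∈ signVecs K, c a * (psiLoss (a * z) - 1) := by
    simp only [psiRisk, mul_sub, mul_one, sum_sub_distrib, hc, sub_zero]
  rw [this, sum_eq_single b (fun a ha hab => by rw [h a ha hab, sub_self, mul_zero])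
    (fun hb' => absurd hb hb')]
  ring

lemma exists_psiRisk_eq (hc : ∑ a ∈ signVecs K, c a = 0) (z : Fin K → ℝ) :
    ∃ b ∈ signVecs K, psiRisk c z = -(c b * (1 - psiLoss (b * z))) := by
  by_cases h : ∃ b ∈ signVecs K, psiLoss (b * z) < 1
  · obtain ⟨b, hb, hbz⟩ := h
    exact ⟨b, hb, psiRisk_eq_of_forall_ne hc hb fun a ha hab =>
      psiLoss_mul_eq_one_of_ne ha hb hab hbz⟩
  · push Not at h
    obtain ⟨b, hb⟩ := signVecs_nonempty K
    exact ⟨b, hb, psiRisk_eq_of_forall_ne hc hb fun a ha _ =>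
      le_antisymm (psiLoss_le_one _) (h a ha)⟩

lemma psiRisk_self {a₀ : Fin K → ℝ} (hc : ∑ a ∈ signVecs K, c a = 0) (ha₀ : a₀ ∈ signVecs K) :
    psiRisk c a₀ = -c a₀ := by
  have hself : psiLoss (a₀ * a₀) = 0 := by
    rw [mul_self_of_mem_signVecs ha₀, psiLoss_eq_zero_iff]
    exact fun _ => le_rfl
  rw [psiRisk_eq_of_forall_ne hc ha₀ fun a ha hab =>
    psiLoss_mul_eq_one_of_ne ha ha₀ hab (hself ▸ one_pos), hself]
  ring

lemma psiLoss_mul_eq_zero_of_psiRisk_le {a₀ z : Fin K → ℝ} (hc : ∑ a ∈ signVecs K, c a = 0)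
    (ha₀ : a₀ ∈ signVecs K) (hmax : ∀ a ∈ signVecs K, a ≠ a₀ → c a < c a₀) (hpos : 0 < c a₀)
    (hz : psiRisk c z ≤ psiRisk c a₀) : psiLoss (a₀ * z) = 0 := by
  obtain ⟨b, hb, hbz⟩ := exists_psiRisk_eq hc z
  rw [hbz, psiRisk_self hc ha₀] at hz
  have hu0 := psiLoss_nonneg (b * z)
  have hu1 := psiLoss_le_one (b * z)
  have hcb : c b ≤ c a₀ := by
    rcases eq_or_ne b a₀ with rfl | hne
    · exact le_rfl
    · exact (hmax b hb hne).le
  -- `c a₀ ≤ c b * u ≤ c a₀ * u` and `u = 1 - ψ(b ⊙ z) ≤ 1` force `u = 1`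
  have hu : psiLoss (b * z) = 0 := by nlinarith
  obtain rfl : b = a₀ := by
    by_contra hne
    have := hmax b hb hne
    rw [hu] at hz
    linarith
  exact hu

end PsiRisk

theorem stmt13 (K : ℕ) (hK : 1 ≤ K) (w : (Fin K → ℝ) → ℝ) (wbar : ℝ)
    (hwbar : wbar = (∑ a ∈ signVecs K, w a) / 2 ^ K)
    (a₀ : Fin K → ℝ) (ha₀ : a₀ ∈ signVecs K)
    (hmax : ∀ a ∈ signVecs K, a ≠ a₀ → w a < w a₀) :
    0 < w a₀ - wbar
      ∧ ∀ z : Fin K → ℝ,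
          (∀ y : Fin K → ℝ,
            ∑ a ∈ signVecs K, (w a - wbar) * psiLoss (fun k => a k * z k)
              ≤ ∑ a ∈ signVecs K, (w a - wbar) * psiLoss (fun k => a k * y k)) →
          ∀ k, 1 ≤ a₀ k * z k := by
  obtain rfl : wbar = 𝔼 a ∈ signVecs K, w a := by
    rw [hwbar, expect_eq_sum_div_card, card_signVecs]
    push_cast; rfl
  have hpos : 0 < w a₀ - 𝔼 a ∈ signVecs K, w a := by
    obtain ⟨b, hb, hba⟩ := exists_mem_signVecs_ne hK ha₀
    refine sub_pos.mpr (expect_lt (fun a ha => ?_) ⟨b, hb, hmax b hb hba⟩)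
    rcases eq_or_ne a a₀ with rfl | hne
    exacts [le_rfl, (hmax a ha hne).le]
  refine ⟨hpos, fun z hmin => ?_⟩
  have hzero := psiLoss_mul_eq_zero_of_psiRisk_le (sum_sub_expect _ w) ha₀
    (fun a ha hne => sub_lt_sub_right (hmax a ha hne) _) hpos (hmin a₀)
  exact psiLoss_eq_zero_iff.mp hzero
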